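/- For all a, b > 0 with a ≠ b, N₃(a,b) - L(a,b) ≤ (5/2)·(N₁(a,b) - L(a,b)), where N₃(a,b) = (a + √(ab) + b)/3, N₁(a,b) = ((√a + √b)/2)², and L is the logarithmic mean. -/

import Mathlib

/-!
Since `L` enters linearly, the inequality is equivalent to `L ≤ (7a + 22√(ab) + 7b)/36`.
Carlson's bound `L ≤ (a + 4√(ab) + b)/6 = (A + 2G)/3` is stronger by `(√a - √b)²/36`.
Substituting `t = √b/√a`, Carlson's bound becomes `3(t² - 1)/(t² + 4t + 1) ≤ log t` for `t ≥ 1`,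
the [2/2] Padé approximant of `log` at `1`: the difference vanishes at `t = 1` and its derivative
`(t - 1)⁴/(t(t² + 4t + 1)²)` is nonnegative.
-/

open Real Set

theorem hasDerivAt_log_sub_pade {x : ℝ} (hx : 0 < x) :
    HasDerivAt (fun t => log t - 3 * (t ^ 2 - 1) / (t ^ 2 + 4 * t + 1))
      ((x - 1) ^ 4 / (x * (x ^ 2 + 4 * x + 1) ^ 2)) x := by
  have hq : HasDerivAt (fun t => 3 * (t ^ 2 - 1) / (t ^ 2 + 4 * t + 1))
      ((3 * (2 * x) * (x ^ 2 + 4 * x + 1) - 3 * (x ^ 2 - 1) * (2 * x + 4)) /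
        (x ^ 2 + 4 * x + 1) ^ 2) x := by
    refine HasDerivAt.div ?_ ?_ (by positivity)
    · simpa using ((hasDerivAt_pow 2 x).sub_const 1).const_mul 3
    · simpa using ((hasDerivAt_pow 2 x).add ((hasDerivAt_id x).const_mul 4)).add_const 1
  refine ((hasDerivAt_log hx.ne').sub hq).congr_deriv ?_
  field_simp
  ring

theorem three_mul_sq_sub_one_div_le_log {t : ℝ} (ht : 1 ≤ t) :
    3 * (t ^ 2 - 1) / (t ^ 2 + 4 * t + 1) ≤ log t := by
  have hderiv (x : ℝ) (hx : x ∈ Ioi (0 : ℝ)) := hasDerivAt_log_sub_pade hx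
  have hmono :
      MonotoneOn (fun t : ℝ => log t - 3 * (t ^ 2 - 1) / (t ^ 2 + 4 * t + 1)) (Ioi 0) := by
    refine monotoneOn_of_hasDerivWithinAt_nonneg (convex_Ioi 0)
      (fun x hx => (hderiv x hx).continuousAt.continuousWithinAt)
      (fun x hx => (hderiv x (interior_subset hx)).hasDerivWithinAt) fun x hx => ?_
    have : 0 < x := interior_subset hx
    positivity
  simpa using hmono (mem_Ioi.2 one_pos) (mem_Ioi.2 (one_pos.trans_le ht)) ht

theorem sub_div_log_sub_log_le {a b : ℝ} (ha : 0 < a) (hb : 0 < b) (hab : a ≠ b) :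
    (b - a) / (log b - log a) ≤ (a + 4 * √(a * b) + b) / 6 := by
  wlog h : a < b generalizing a b
  · have := this hb ha hab.symm (lt_of_le_of_ne (not_lt.1 h) hab.symm)
    rwa [← neg_div_neg_eq, neg_sub, neg_sub, mul_comm b,
      show b + 4 * √(a * b) + a = a + 4 * √(a * b) + b by ring] at this
  set x := √a
  set y := √b
  have hx : 0 < x := sqrt_pos.2 ha
  have hy : 0 < y := sqrt_pos.2 hb
  have hpade := three_mul_sq_sub_one_div_le_log ((one_le_div hx).2 (sqrt_le_sqrt h.le))
  have hlog : log (y / x) = (log b - log a) / 2 := by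
    rw [log_div hy.ne' hx.ne', log_sqrt ha.le, log_sqrt hb.le]; ring
  rw [hlog, div_le_iff₀ (by positivity)] at hpade
  have key : 3 * (y ^ 2 - x ^ 2) ≤ (log b - log a) / 2 * (x ^ 2 + 4 * (x * y) + y ^ 2) :=
    calc 3 * (y ^ 2 - x ^ 2) = x ^ 2 * (3 * ((y / x) ^ 2 - 1)) := by field_simp
      _ ≤ x ^ 2 * ((log b - log a) / 2 * ((y / x) ^ 2 + 4 * (y / x) + 1)) := by gcongr
      _ = (log b - log a) / 2 * (x ^ 2 + 4 * (x * y) + y ^ 2) := by field_simp; ring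
  rw [sq_sqrt ha.le, sq_sqrt hb.le] at key
  rw [div_le_div_iff₀ (sub_pos.2 (log_lt_log ha h)) (by norm_num), sqrt_mul ha.le]
  linear_combination 2 * key

theorem MN3L_le_MN1L (a b : ℝ) (ha : 0 < a) (hb : 0 < b) (hab : a ≠ b) :
    (a + Real.sqrt (a * b) + b) / 3 - (b - a) / (Real.log b - Real.log a) ≤
      (5 / 2) * (((Real.sqrt a + Real.sqrt b) / 2) ^ 2 -
        (b - a) / (Real.log b - Real.log a)) := by
  have hcarlson := sub_div_log_sub_log_le ha hb hab
  have hsq : (√a + √b) ^ 2 = a + 2 * √(a * b) + b := by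
    rw [add_sq, sq_sqrt ha.le, sq_sqrt hb.le, sqrt_mul ha.le]; ring
  have hamgm : 2 * √(a * b) ≤ a + b := by
    nlinarith [sq_nonneg (√a - √b), sq_sqrt ha.le, sq_sqrt hb.le, sqrt_mul ha.le b]
  rw [div_pow, hsq]
  linarith
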